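/- Let H : ℂ × ℂ → ℂ be analytic at the point (0,0). If H(u, u⁻¹ · exp(-1/u)) = 0 for all sufficiently small real u > 0, then H vanishes identically on some neighborhood of (0,0) in ℂ × ℂ. -/

import Mathlib

/-!
Expand `H (x, y) = ∑ⱼ yʲ cⱼ(x)` in the second variable (`cⱼ = sndTaylorCoeff H j`): the
coefficients are analytic in `x` and obey uniform Cauchy bounds `‖cⱼ(x)‖ ≤ M / ρʲ`. If
`c₀, …, cₖ₋₁` vanish, then evaluating the series on the curve `(u, φ u)` gives
`‖cₖ(u)‖ = O(‖φ u‖)`; since `φ u = u⁻¹ exp (-1/u)` is flat at `0⁺`, so is `cₖ` along the positive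
reals, which forces the analytic function `cₖ` to vanish. By induction every `cⱼ` vanishes, hence
so does `H`.
-/

open Complex Metric Filter Set Topology Asymptotics

variable {E : Type*} [NormedAddCommGroup E] [NormedSpace ℂ E]

lemma AnalyticAt.eventually_eq_zero_of_isLittleO_pow {g : ℂ → E} (hg : AnalyticAt ℂ g 0)
    (hflat : ∀ n : ℕ, (fun u : ℝ => g u) =o[𝓝[>] 0] (fun u => u ^ n)) :
    ∀ᶠ z in 𝓝 0, g z = 0 := by
  by_contra hne
  obtain ⟨n, G, hG, hG0, hfac⟩ := hg.exists_eventuallyEq_pow_smul_nonzero_iff.mpr hne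
  have hreal : Tendsto (fun u : ℝ => (u : ℂ)) (𝓝[>] 0) (𝓝 0) :=
    (continuous_ofReal.tendsto' 0 0 ofReal_zero).mono_left nhdsWithin_le_nhds
  have hlim_zero : Tendsto (fun u : ℝ => ‖G u‖) (𝓝[>] 0) (𝓝 0) := by
    refine (hflat n).norm_left.tendsto_div_nhds_zero.congr' ?_
    filter_upwards [hreal.eventually hfac, self_mem_nhdsWithin] with u hu (hpos : 0 < u)
    rw [hu, sub_zero, norm_smul, norm_pow, norm_real, Real.norm_of_nonneg hpos.le]
    field_simp
  have hlim : Tendsto (fun u : ℝ => ‖G u‖) (𝓝[>] 0) (𝓝 ‖G 0‖) :=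
    hG.continuousAt.norm.tendsto.comp hreal
  exact hG0 (norm_eq_zero.mp (tendsto_nhds_unique hlim hlim_zero))

lemma norm_le_of_hasSum_pow_smul_eq_zero {a : ℕ → E} {y : ℂ} {M ρ : ℝ} {k : ℕ} (hρ : 0 < ρ)
    (hsum : HasSum (fun j => y ^ j • a j) 0) (ha : ∀ j, ‖a j‖ ≤ M / ρ ^ j)
    (hlow : ∀ j < k, a j = 0) (hy0 : y ≠ 0) (hy : ‖y‖ ≤ ρ / 2) :
    ‖a k‖ ≤ 2 * M / ρ ^ (k + 1) * ‖y‖ := by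
  have hM : 0 ≤ M := by simpa using (norm_nonneg _).trans (ha 0)
  have hshift : HasSum (fun i => y ^ i • a (i + k)) 0 := by
    have h := (hasSum_nat_add_iff' k).mpr hsum
    rw [Finset.sum_eq_zero fun j hj => by rw [hlow j (Finset.mem_range.mp hj), smul_zero],
      sub_zero] at h
    simp only [pow_add, mul_comm _ (y ^ k), mul_smul] at h
    simpa [smul_smul, hy0] using h.const_smul (y ^ k)⁻¹
  have htail : HasSum (fun i => y ^ (i + 1) • a (i + 1 + k)) (-a k) := by
    simpa using (hasSum_nat_add_iff' 1).mpr hshift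
  set q := ‖y‖ / ρ
  have hq : q ≤ 1 / 2 := by rw [div_le_iff₀ hρ]; linarith
  have hbound : ∀ i, ‖y ^ (i + 1) • a (i + 1 + k)‖ ≤ M / ρ ^ k * q * (1 / 2) ^ i := by
    intro i
    calc ‖y ^ (i + 1) • a (i + 1 + k)‖ ≤ ‖y‖ ^ (i + 1) * (M / ρ ^ (i + 1 + k)) := by
          rw [norm_smul, norm_pow]; gcongr; exact ha _
      _ = M / ρ ^ k * q * q ^ i := by simp only [q, div_pow]; field_simp; ring
      _ ≤ M / ρ ^ k * q * (1 / 2) ^ i := by gcongr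
  have := htail.norm_le_of_bounded (hasSum_geometric_two.mul_left (M / ρ ^ k * q)) hbound
  rw [norm_neg] at this
  calc ‖a k‖ ≤ M / ρ ^ k * q * 2 := this
    _ = 2 * M / ρ ^ (k + 1) * ‖y‖ := by simp only [q]; field_simp; ring

section Slice

variable {𝕜 F : Type*} [NontriviallyNormedField 𝕜] [NormedAddCommGroup F] [NormedSpace 𝕜 F]

noncomputable def sndPartial (f : 𝕜 × 𝕜 → F) : 𝕜 × 𝕜 → F := fun p => fderiv 𝕜 f p (0, 1)

lemma AnalyticOnNhd.iterate_sndPartial [CompleteSpace F] {f : 𝕜 × 𝕜 → F} {s : Set (𝕜 × 𝕜)}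
    (hf : AnalyticOnNhd 𝕜 f s) (k : ℕ) : AnalyticOnNhd 𝕜 (sndPartial^[k] f) s := by
  induction k with
  | zero => exact hf
  | succ k ih =>
    rw [Function.iterate_succ_apply']
    exact (ContinuousLinearMap.apply 𝕜 F ((0 : 𝕜), (1 : 𝕜))).comp_analyticOnNhd ih.fderiv

lemma DifferentiableAt.deriv_slice_eq_sndPartial {f : 𝕜 × 𝕜 → F} {x y : 𝕜}
    (hf : DifferentiableAt 𝕜 f (x, y)) :
    deriv (fun w => f (x, w)) y = sndPartial f (x, y) :=
  (hf.hasFDerivAt.comp_hasDerivAt y ((hasDerivAt_const y x).prodMk (hasDerivAt_id y))).deriv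

lemma AnalyticOnNhd.iteratedDeriv_slice_eq [CompleteSpace F] {f : 𝕜 × 𝕜 → F}
    {s : Set (𝕜 × 𝕜)} (hs : IsOpen s) (hf : AnalyticOnNhd 𝕜 f s) (k : ℕ) {x y : 𝕜}
    (hxy : (x, y) ∈ s) :
    iteratedDeriv k (fun w => f (x, w)) y = (sndPartial^[k] f) (x, y) := by
  induction k generalizing y with
  | zero => rfl
  | succ k ih =>
    have hslice : ∀ᶠ w in 𝓝 y, (x, w) ∈ s :=
      (continuous_const.prodMk continuous_id).continuousAt.preimage_mem_nhds (hs.mem_nhds hxy)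
    rw [iteratedDeriv_succ, (eventuallyEq_of_mem hslice fun w hw => ih hw).deriv_eq,
      Function.iterate_succ_apply']
    exact ((hf.iterate_sndPartial k _ hxy).differentiableAt).deriv_slice_eq_sndPartial

end Slice

section TaylorCoeff

noncomputable def sndTaylorCoeff (H : ℂ × ℂ → E) (j : ℕ) (x : ℂ) : E :=
  (j.factorial : ℂ)⁻¹ • iteratedDeriv j (fun w => H (x, w)) 0

variable {H : ℂ × ℂ → E} {r : ℝ}

lemma AnalyticOnNhd.differentiableOn_slice (hH : AnalyticOnNhd ℂ H (ball 0 r)) {x : ℂ}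
    (hx : ‖x‖ < r) : DifferentiableOn ℂ (fun w => H (x, w)) (ball 0 r) := fun w hw =>
  ((hH _ (by simp_all)).differentiableAt.comp w
    ((differentiableAt_const x).prodMk differentiableAt_id)).differentiableWithinAt

variable [CompleteSpace E]

lemma AnalyticOnNhd.hasSum_sndTaylorCoeff (hH : AnalyticOnNhd ℂ H (ball 0 r)) {x y : ℂ}
    (hxy : (x, y) ∈ ball 0 r) : HasSum (fun j => y ^ j • sndTaylorCoeff H j x) (H (x, y)) := by
  simp only [mem_ball_zero_iff, Prod.norm_mk, max_lt_iff] at hxy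
  simpa [sndTaylorCoeff, smul_comm _ (y ^ _)] using
    hasSum_taylorSeries_on_ball (hH.differentiableOn_slice hxy.1) (mem_ball_zero_iff.mpr hxy.2)

lemma AnalyticOnNhd.exists_norm_sndTaylorCoeff_le (hH : AnalyticOnNhd ℂ H (ball 0 r))
    (hr : 0 < r) :
    ∃ ρ > 0, ρ ≤ r ∧ ∃ M, ∀ j x, ‖x‖ ≤ ρ → ‖sndTaylorCoeff H j x‖ ≤ M / ρ ^ j := by
  have hρr : r / 2 < r := half_lt_self hr
  obtain ⟨M, hM⟩ := (isCompact_closedBall (0 : ℂ × ℂ) (r / 2)).exists_bound_of_continuousOn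
    (hH.continuousOn.mono (closedBall_subset_ball hρr))
  refine ⟨r / 2, half_pos hr, hρr.le, M, fun j x hx => ?_⟩
  have hcauchy := norm_iteratedDeriv_le_of_forall_mem_sphere_norm_le j (half_pos hr)
    ((hH.differentiableOn_slice (hx.trans_lt hρr)).diffContOnCl_ball
      (closedBall_subset_ball hρr)) fun w hw => hM _ (by simp_all)
  rw [sndTaylorCoeff, norm_smul, norm_inv, norm_natCast, inv_mul_le_iff₀ (by positivity)]
  simpa [mul_div_assoc] using hcauchy

lemma AnalyticOnNhd.sndTaylorCoeff (hH : AnalyticOnNhd ℂ H (ball 0 r)) (j : ℕ) :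
    AnalyticOnNhd ℂ (sndTaylorCoeff H j) (ball 0 r) := by
  have hmem : MapsTo (fun x : ℂ => (x, (0 : ℂ))) (ball 0 r) (ball 0 r) := fun x hx => by
    simpa using hx
  refine (((hH.iterate_sndPartial j).comp (analyticOnNhd_id.prod analyticOnNhd_const) hmem
    ).const_smul (c := (j.factorial : ℂ)⁻¹)).congr isOpen_ball fun x hx => ?_
  rw [_root_.sndTaylorCoeff, hH.iteratedDeriv_slice_eq isOpen_ball j (hmem hx)]
  rfl

end TaylorCoeff

section FlatCurve

variable [CompleteSpace E] {H : ℂ × ℂ → E} {φ : ℝ → ℂ}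

lemma eqOn_zero_sndTaylorCoeff_of_flat_curve {r ρ M : ℝ} (hH : AnalyticOnNhd ℂ H (ball 0 r))
    (hr : 0 < r) (hρ : 0 < ρ) (hρr : ρ ≤ r)
    (hbound : ∀ j x, ‖x‖ ≤ ρ → ‖sndTaylorCoeff H j x‖ ≤ M / ρ ^ j)
    (hφ : ∀ n : ℕ, φ =o[𝓝[>] 0] (fun u => u ^ n)) (hφ0 : ∀ᶠ u in 𝓝[>] 0, φ u ≠ 0)
    (hvan : ∀ᶠ u : ℝ in 𝓝[>] 0, H (u, φ u) = 0) {k : ℕ}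
    (hlow : ∀ j < k, EqOn (sndTaylorCoeff H j) 0 (ball 0 r)) :
    EqOn (sndTaylorCoeff H k) 0 (ball 0 r) := by
  have hφsmall : ∀ᶠ u in 𝓝[>] 0, ‖φ u‖ ≤ ρ / 2 :=
    (isLittleO_one_iff ℝ).mp (by simpa using hφ 0) |>.norm.eventually
      (eventually_le_nhds (by simpa using half_pos hρ))
  have hbigO : (fun u : ℝ => sndTaylorCoeff H k u) =O[𝓝[>] 0] φ := by
    refine IsBigO.of_bound (2 * M / ρ ^ (k + 1)) ?_
    filter_upwards [hvan, hφ0, hφsmall, Ioo_mem_nhdsGT hρ] with u hu hu0 hφρ huρ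
    have hnorm : ‖(u : ℂ)‖ < ρ := by simpa [abs_of_pos huρ.1] using huρ.2
    have hmem : ((u : ℂ), φ u) ∈ ball 0 r := by
      simp only [mem_ball_zero_iff, Prod.norm_mk, max_lt_iff]
      constructor <;> linarith
    refine norm_le_of_hasSum_pow_smul_eq_zero hρ ?_ (fun j => hbound j u hnorm.le)
      (fun j hj => hlow j hj (ball_subset_ball hρr (mem_ball_zero_iff.mpr hnorm))) hu0 hφρ
    simpa [hu] using hH.hasSum_sndTaylorCoeff hmem
  have hzero : ∀ᶠ z in 𝓝 0, sndTaylorCoeff H k z = 0 :=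
    (hH.sndTaylorCoeff k 0 (mem_ball_self hr)).eventually_eq_zero_of_isLittleO_pow
      fun n => hbigO.trans_isLittleO (hφ n)
  exact (hH.sndTaylorCoeff k).eqOn_zero_of_preconnected_of_eventuallyEq_zero
    (convex_ball 0 r).isPreconnected (mem_ball_self hr) hzero

theorem AnalyticAt.eventually_eq_zero_of_flat_curve (hH : AnalyticAt ℂ H 0)
    (hφ : ∀ n : ℕ, φ =o[𝓝[>] 0] (fun u => u ^ n)) (hφ0 : ∀ᶠ u in 𝓝[>] 0, φ u ≠ 0)
    (hvan : ∀ᶠ u : ℝ in 𝓝[>] 0, H (u, φ u) = 0) : ∀ᶠ p in 𝓝 0, H p = 0 := by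
  obtain ⟨r, hr, hHr⟩ : ∃ r > 0, AnalyticOnNhd ℂ H (ball 0 r) :=
    eventually_nhds_iff_ball.mp hH.eventually_analyticAt
  obtain ⟨ρ, hρ, hρr, M, hbound⟩ := hHr.exists_norm_sndTaylorCoeff_le hr
  have hcoeff : ∀ k, EqOn (sndTaylorCoeff H k) 0 (ball 0 r) := fun k =>
    Nat.strong_induction_on k fun _ hlow =>
      eqOn_zero_sndTaylorCoeff_of_flat_curve hHr hr hρ hρr hbound hφ hφ0 hvan hlow
  filter_upwards [ball_mem_nhds 0 hr] with p hp
  have hx : p.1 ∈ ball 0 r := by simpa using (norm_fst_le p).trans_lt (mem_ball_zero_iff.mp hp)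
  refine (hHr.hasSum_sndTaylorCoeff hp).unique ?_
  simp [hcoeff _ hx, hasSum_zero]

end FlatCurve

lemma isLittleO_exp_neg_inv_div_pow (n : ℕ) :
    (fun u : ℝ => Real.exp (-1 / u) / u) =o[𝓝[>] 0] (fun u => u ^ n) := by
  refine (isLittleO_iff_tendsto' (eventually_mem_nhdsWithin.mono fun u (hu : 0 < u) h =>
    absurd h (pow_pos hu n).ne')).mpr ?_
  refine ((Real.tendsto_pow_mul_exp_neg_atTop_nhds_zero (n + 1)).comp
    tendsto_inv_nhdsGT_zero).congr' ?_
  filter_upwards [self_mem_nhdsWithin] with u (hu : 0 < u)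
  simp only [Function.comp_apply, inv_pow, pow_succ]
  field_simp

lemma isLittleO_inv_mul_exp_neg_inv (n : ℕ) :
    (fun u : ℝ => (u : ℂ)⁻¹ * exp (-1 / u)) =o[𝓝[>] 0] (fun u => u ^ n) := by
  refine ((isLittleO_exp_neg_inv_div_pow n).congr' ?_ EventuallyEq.rfl).of_norm_left
  filter_upwards [self_mem_nhdsWithin] with u (hu : 0 < u)
  rw [norm_mul, norm_inv, norm_real, Real.norm_of_nonneg hu.le,
    show -1 / (u : ℂ) = ((-1 / u : ℝ) : ℂ) by push_cast; rfl, norm_exp_ofReal, inv_mul_eq_div]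

/-- If `H : ℂ × ℂ → ℂ` is analytic at `(0,0)` and `H (u, u⁻¹ * exp (-1/u)) = 0` for
all sufficiently small real `u > 0`, then `H` vanishes identically on a neighborhood
of `(0,0)`. -/
theorem analytic_vanishing_on_inv_exp_curve (H : ℂ × ℂ → ℂ)
    (hH : AnalyticAt ℂ H (0, 0))
    (hvan : ∀ᶠ u : ℝ in nhdsWithin 0 (Set.Ioi 0),
      H ((u : ℂ), (u : ℂ)⁻¹ * Complex.exp (-1 / (u : ℂ))) = 0) :
    ∀ᶠ p : ℂ × ℂ in nhds (0, 0), H p = 0 :=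
  hH.eventually_eq_zero_of_flat_curve (φ := fun u : ℝ => (u : ℂ)⁻¹ * exp (-1 / u))
    isLittleO_inv_mul_exp_neg_inv
    (eventually_mem_nhdsWithin.mono fun u (hu : 0 < u) =>
      mul_ne_zero (inv_ne_zero (ofReal_ne_zero.mpr hu.ne')) (exp_ne_zero _)) hvan
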